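/- Let G(V) be a finite connected network with Gaussian free field {η_v}_{v∈V} viewed as elements of an L² Hilbert space. Then for any vertex w ∈ V and any subset S ⊆ V, √(R_eff(w,S)) equals the L² distance from η_w to the affine hull of {η_u : u ∈ S}. -/

import Mathlib

open MeasureTheory ProbabilityTheory

/-- Dirichlet energy of a function on a network. -/
noncomputable def energy {V : Type*} [Fintype V] (c : V → V → ℝ) (f : V → ℝ) : ℝ :=
  (1 / 2) * ∑ x, ∑ y, c x y * (f x - f y) ^ 2

/-- A network is connected if only constant functions have zero energy. -/
def Connected {V : Type*} [Fintype V] (c : V → V → ℝ) : Prop :=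
  ∀ f : V → ℝ, energy c f = 0 → ∀ x y, f x = f y

/-- Effective conductance between two disjoint vertex sets, via the Dirichlet principle. -/
noncomputable def effCond {V : Type*} [Fintype V] (c : V → V → ℝ) (A B : Set V) : ℝ :=
  sInf {e | ∃ f : V → ℝ, (∀ a ∈ A, f a = 1) ∧ (∀ b ∈ B, f b = 0) ∧ e = energy c f}

/-- Effective resistance between two vertex sets. -/
noncomputable def effRes {V : Type*} [Fintype V] (c : V → V → ℝ) (A B : Set V) : ℝ :=
  1 / effCond c A B

/-- A centered Gaussian process on a finite index set `V`. -/
def IsCenteredGaussianProcess {V Ω : Type*} [Fintype V] [MeasurableSpace Ω]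
    (μ : Measure Ω) (η : V → Ω → ℝ) : Prop :=
  ∀ c : V → ℝ, ∃ v : NNReal,
    Measure.map (fun ω => ∑ x, c x * η x ω) μ = gaussianReal 0 v

/-!
For coefficients `β` with `∑ β = 0`, expanding the squares gives
`(∑ β_u x_u)² = -½ ∑_{u,v} β_u β_v (x_u - x_v)²`, for real numbers as for any symmetric
bilinear form. Applied pointwise to `η` and integrated, and applied to the Dirichlet form with
potentials of `δ_u - δ_r` (whose differences have energy `R_eff(u,v)`), it shows that
`E[(∑ β_u η_u)²]` is the energy of any `F` with `ΔF = β`. For `β = δ_w - α` with `α` supported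
on `S`, pairing `F` with the unit-current potential `φ` from `w` to `S`, grounded on `S`, gives
`⟨F, φ⟩ = φ(w) = R_eff(w,S) = ⟨φ, φ⟩`, so Cauchy–Schwarz bounds the energy of `F` below by
`R_eff(w,S)`, with equality at `F = φ`.
-/

theorem LinearMap.BilinForm.IsSymm.sum_sum_mul_apply_sub_sub {R M ι : Type*} [CommRing R]
    [AddCommGroup M] [Module R M] {B : LinearMap.BilinForm R M} (hB : B.IsSymm)
    (s : Finset ι) (β : ι → R) (x : ι → M) (hβ : ∑ i ∈ s, β i = 0) :
    ∑ i ∈ s, ∑ j ∈ s, β i * β j * B (x i - x j) (x i - x j) =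
      -2 * B (∑ i ∈ s, β i • x i) (∑ i ∈ s, β i • x i) := by
  have hexpand : ∀ i j, β i * β j * B (x i - x j) (x i - x j) = β i * B (x i) (x i) * β j
      + β i * (β j * B (x j) (x j)) - 2 * (β i * (β j * B (x j) (x i))) :=
    fun i j => by simp only [map_sub, LinearMap.sub_apply, hB.eq (x i) (x j)]; ring
  simp only [hexpand, Finset.sum_sub_distrib, Finset.sum_add_distrib, ← Finset.mul_sum,
    ← Finset.sum_mul, hβ, mul_zero, zero_mul, zero_add, map_sum, map_smul, LinearMap.sum_apply,
    LinearMap.smul_apply, smul_eq_mul]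
  ring

namespace Network

open Finset

variable {V : Type*} [Fintype V]

noncomputable def laplacian (c : V → V → ℝ) : (V → ℝ) →ₗ[ℝ] V → ℝ where
  toFun f x := ∑ y, c x y * (f x - f y)
  map_add' f g := by
    ext x
    simp only [Pi.add_apply, ← sum_add_distrib]
    exact sum_congr rfl fun y _ => by ring
  map_smul' a f := by
    ext x
    simp only [Pi.smul_apply, smul_eq_mul, RingHom.id_apply, mul_sum]
    exact sum_congr rfl fun y _ => by ring

noncomputable def dirichletForm (c : V → V → ℝ) : LinearMap.BilinForm ℝ (V → ℝ) :=
  LinearMap.mk₂ ℝ (fun f g => (1 / 2) * ∑ x, ∑ y, c x y * (f x - f y) * (g x - g y))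
    (fun f f' g => by
      simp only [Pi.add_apply, ← mul_add, ← sum_add_distrib]
      congr 1
      exact sum_congr rfl fun x _ => sum_congr rfl fun y _ => by ring)
    (fun a f g => by
      simp only [Pi.smul_apply, smul_eq_mul, mul_sum]
      exact sum_congr rfl fun x _ => sum_congr rfl fun y _ => by ring)
    (fun f g g' => by
      simp only [Pi.add_apply, ← mul_add, ← sum_add_distrib]
      congr 1
      exact sum_congr rfl fun x _ => sum_congr rfl fun y _ => by ring)
    (fun a f g => by
      simp only [Pi.smul_apply, smul_eq_mul, mul_sum]
      exact sum_congr rfl fun x _ => sum_congr rfl fun y _ => by ring)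

variable {c : V → V → ℝ}

theorem laplacian_apply (f : V → ℝ) (x : V) :
    laplacian c f x = ∑ y, c x y * (f x - f y) := rfl

theorem dirichletForm_apply (f g : V → ℝ) :
    dirichletForm c f g = (1 / 2) * ∑ x, ∑ y, c x y * (f x - f y) * (g x - g y) := rfl

theorem dirichletForm_self (f : V → ℝ) : dirichletForm c f f = energy c f := by
  rw [dirichletForm_apply, energy]
  exact congrArg _ (sum_congr rfl fun x _ => sum_congr rfl fun y _ => by ring)

theorem dirichletForm_isSymm : (dirichletForm c).IsSymm := by
  refine ⟨fun f g => ?_⟩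
  simp only [dirichletForm_apply]
  exact congrArg _ (sum_congr rfl fun x _ => sum_congr rfl fun y _ => by ring)

theorem energy_nonneg (hnn : ∀ a b, 0 ≤ c a b) (f : V → ℝ) : 0 ≤ energy c f :=
  mul_nonneg (by norm_num) <| sum_nonneg fun x _ => sum_nonneg fun y _ =>
    mul_nonneg (hnn x y) (sq_nonneg _)

theorem dirichletForm_eq_sum_laplacian_mul (hsymm : ∀ a b, c a b = c b a) (f g : V → ℝ) :
    dirichletForm c f g = ∑ x, laplacian c f x * g x := by
  have hsplit : ∑ x, ∑ y, c x y * (f x - f y) * (g x - g y)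
      = ∑ x, ∑ y, c x y * (f x - f y) * g x - ∑ x, ∑ y, c x y * (f x - f y) * g y := by
    rw [← sum_sub_distrib]
    exact sum_congr rfl fun x _ => by rw [← sum_sub_distrib]; exact sum_congr rfl fun y _ => by ring
  have hswap : ∑ x, ∑ y, c x y * (f x - f y) * g y = - ∑ x, ∑ y, c x y * (f x - f y) * g x := by
    rw [sum_comm, ← sum_neg_distrib]
    exact sum_congr rfl fun y _ => by
      rw [← sum_neg_distrib]; exact sum_congr rfl fun x _ => by rw [hsymm]; ring
  simp only [dirichletForm_apply, hsplit, hswap, laplacian_apply, sum_mul]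
  ring

theorem sum_laplacian (hsymm : ∀ a b, c a b = c b a) (f : V → ℝ) :
    ∑ x, laplacian c f x = 0 := by
  simpa [dirichletForm_apply] using (dirichletForm_eq_sum_laplacian_mul hsymm f fun _ => 1).symm

theorem eq_of_laplacian_eq_zero (hsymm : ∀ a b, c a b = c b a) (hconn : Connected c)
    {f : V → ℝ} (hf : laplacian c f = 0) (x y : V) : f x = f y :=
  hconn f (by simp [← dirichletForm_self, dirichletForm_eq_sum_laplacian_mul hsymm, hf]) x y

theorem energy_eq_of_laplacian_eq (hsymm : ∀ a b, c a b = c b a) (hconn : Connected c)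
    {f g : V → ℝ} (h : laplacian c f = laplacian c g) : energy c f = energy c g := by
  have hconst := eq_of_laplacian_eq_zero hsymm hconn (f := f - g) (by rw [map_sub, h, sub_self])
  unfold energy
  refine congrArg _ (sum_congr rfl fun x _ => sum_congr rfl fun y _ => ?_)
  have := hconst x y
  simp only [Pi.sub_apply] at this
  rw [show f x - f y = g x - g y by linarith]

theorem effRes_singleton_of_mem {w : V} {S : Set V} (hw : w ∈ S) : effRes c {w} S = 0 := by
  have hempty : {e | ∃ f : V → ℝ, (∀ a ∈ ({w} : Set V), f a = 1) ∧ (∀ b ∈ S, f b = 0) ∧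
      e = energy c f} = ∅ :=
    Set.eq_empty_of_forall_notMem fun e ⟨f, h1, h0, _⟩ => by simpa [h1 w rfl] using h0 w hw
  simp only [effRes, effCond, hempty, Real.sInf_empty, div_zero]

theorem effRes_singleton_empty (hnn : ∀ a b, 0 ≤ c a b) (w : V) : effRes c {w} ∅ = 0 := by
  have hleast : IsLeast {e | ∃ f : V → ℝ, (∀ a ∈ ({w} : Set V), f a = 1) ∧
      (∀ b ∈ (∅ : Set V), f b = 0) ∧ e = energy c f} 0 :=
    ⟨⟨fun _ => 1, by simp, by simp, by simp [energy]⟩,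
      by rintro e ⟨f, -, -, rfl⟩; exact energy_nonneg hnn f⟩
  simp only [effRes, effCond, hleast.csInf_eq, div_zero]

theorem exists_harmonic_of_notMem (hnn : ∀ a b, 0 ≤ c a b) (hconn : Connected c)
    {w : V} {S : Set V} (hw : w ∉ S) :
    ∃ h : V → ℝ, h w = 1 ∧ (∀ s ∈ S, h s = 0) ∧
      ∀ g : V → ℝ, g w = 0 → (∀ s ∈ S, g s = 0) → dirichletForm c h g = 0 := by
  classical
  set W : Submodule ℝ (V → ℝ) := Submodule.pi (insert w S) fun _ => ⊥
  have hmem : ∀ g, g ∈ W ↔ g w = 0 ∧ ∀ s ∈ S, g s = 0 := by simp [W, Submodule.mem_pi]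
  have hnondeg : ((dirichletForm c).restrict W).Nondegenerate := by
    refine (((dirichletForm c).restrict W).nondegenerate_iff
      (fun g => (dirichletForm_self (c := c) g).trans_ge (energy_nonneg hnn g))
      (LinearMap.BilinForm.isSymm_iff.1 (dirichletForm_isSymm.restrict W))).2
      fun g => ⟨fun hg => ?_, fun hg => by simp [hg]⟩
    have hconst := hconn g (by rwa [← dirichletForm_self])
    ext x
    simp [hconst x w, ((hmem g).1 g.2).1]
  obtain ⟨p, h, hp, hh, hph⟩ := Submodule.codisjoint_iff_exists_add_eq.1
    (LinearMap.BilinForm.isCompl_orthogonal_of_restrict_nondegenerate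
      dirichletForm_isSymm.isRefl hnondeg).codisjoint (Pi.single w 1)
  have hval : h = Pi.single w 1 - p := eq_sub_of_add_eq' hph
  refine ⟨h, by simp [hval, ((hmem p).1 hp).1], fun s hs => ?_, fun g hgw hgS => ?_⟩
  · simp [hval, ((hmem p).1 hp).2 s hs, show s ≠ w by rintro rfl; exact hw hs]
  · rw [dirichletForm_isSymm.eq]
    exact (LinearMap.BilinForm.mem_orthogonal_iff.1 hh) g ((hmem g).2 ⟨hgw, hgS⟩)

theorem effCond_eq_energy_of_harmonic (hnn : ∀ a b, 0 ≤ c a b) {w : V} {S : Set V}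
    {h : V → ℝ} (hw : h w = 1) (hS : ∀ s ∈ S, h s = 0)
    (hharm : ∀ g : V → ℝ, g w = 0 → (∀ s ∈ S, g s = 0) → dirichletForm c h g = 0) :
    effCond c {w} S = energy c h := by
  refine IsLeast.csInf_eq ⟨⟨h, by simpa using hw, hS, rfl⟩, ?_⟩
  rintro e ⟨f, hf1, hfS, rfl⟩
  have horth : dirichletForm c h (f - h) = 0 :=
    hharm _ (by simp [hf1 w rfl, hw]) fun s hs => by simp [hfS s hs, hS s hs]
  calc energy c h ≤ energy c h + energy c (f - h) := le_add_of_nonneg_right (energy_nonneg hnn _)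
    _ = dirichletForm c (h + (f - h)) (h + (f - h)) := by
      simp only [map_add, LinearMap.add_apply, dirichletForm_isSymm.eq (f - h) h, horth,
        dirichletForm_self]
      ring
    _ = energy c f := by rw [add_sub_cancel, dirichletForm_self]

variable [DecidableEq V]

theorem dirichletForm_eq_apply_of_laplacian_eq (hsymm : ∀ a b, c a b = c b a)
    {F α g : V → ℝ} {w : V} {S : Set V} (hF : laplacian c F = Pi.single w 1 - α)
    (hα : ∀ u ∉ S, α u = 0) (hg : ∀ s ∈ S, g s = 0) :
    dirichletForm c F g = g w := by
  have hαg : ∀ x, α x * g x = 0 := fun x => by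
    by_cases hx : x ∈ S
    · rw [hg x hx, mul_zero]
    · rw [hα x hx, zero_mul]
  simp [dirichletForm_eq_sum_laplacian_mul hsymm, hF, sub_mul, hαg, Pi.single_apply]

theorem exists_unitCurrent_potential (hsymm : ∀ a b, c a b = c b a) (hnn : ∀ a b, 0 ≤ c a b)
    (hconn : Connected c) {S : Set V} (hS : S.Nonempty) (w : V) :
    ∃ φ α : V → ℝ, (∀ u ∉ S, α u = 0) ∧ ∑ u, α u = 1 ∧
      laplacian c φ = Pi.single w 1 - α ∧ (∀ s ∈ S, φ s = 0) ∧ φ w = effRes c {w} S := by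
  by_cases hw : w ∈ S
  · refine ⟨0, Pi.single w 1, fun u hu => ?_, by simp, by simp, fun _ _ => rfl,
      (effRes_singleton_of_mem hw).symm⟩
    exact Pi.single_eq_of_ne (by rintro rfl; exact hu hw) _
  obtain ⟨h, hw1, hS0, hharm⟩ := exists_harmonic_of_notMem hnn hconn hw
  have hlap_off : ∀ x, x ≠ w → x ∉ S → laplacian c h x = 0 := fun x hxw hxS => by
    simpa [dirichletForm_eq_sum_laplacian_mul hsymm, Pi.single_apply] using
      hharm (Pi.single x 1) (Pi.single_eq_of_ne hxw.symm _)
        fun s hs => Pi.single_eq_of_ne (by rintro rfl; exact hxS hs) _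
  have hlap_w : laplacian c h w = energy c h := by
    rw [← dirichletForm_self, dirichletForm_eq_sum_laplacian_mul hsymm,
      sum_eq_single w (fun x _ hxw => ?_) (by simp), hw1, mul_one]
    by_cases hxS : x ∈ S
    · rw [hS0 x hxS, mul_zero]
    · rw [hlap_off x hxw hxS, zero_mul]
  have hpos : 0 < energy c h := by
    refine (energy_nonneg hnn h).lt_of_ne fun h0 => ?_
    obtain ⟨s, hs⟩ := hS
    simpa [hw1, hS0 s hs] using hconn h h0.symm w s
  refine ⟨(energy c h)⁻¹ • h, Pi.single w 1 - (energy c h)⁻¹ • laplacian c h,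
    fun u hu => ?_, ?_, by rw [map_smul, sub_sub_cancel], fun s hs => by simp [hS0 s hs], ?_⟩
  · by_cases huw : u = w
    · subst huw
      simp [hlap_w, hpos.ne']
    · simp [huw, hlap_off u huw hu]
  · simp [sum_sub_distrib, ← mul_sum, sum_laplacian hsymm]
  · simp [hw1, effRes, effCond_eq_energy_of_harmonic hnn hw1 hS0 hharm]

theorem exists_energy_eq_effRes (hsymm : ∀ a b, c a b = c b a) (hnn : ∀ a b, 0 ≤ c a b)
    (hconn : Connected c) {S : Set V} (hS : S.Nonempty) (w : V) :
    ∃ F α : V → ℝ, (∀ u ∉ S, α u = 0) ∧ ∑ u, α u = 1 ∧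
      laplacian c F = Pi.single w 1 - α ∧ energy c F = effRes c {w} S := by
  obtain ⟨φ, α, hα, hsum, hφ, hφS, hφw⟩ := exists_unitCurrent_potential hsymm hnn hconn hS w
  exact ⟨φ, α, hα, hsum, hφ, by
    rw [← dirichletForm_self, dirichletForm_eq_apply_of_laplacian_eq hsymm hφ hα hφS, hφw]⟩

theorem effRes_le_energy (hsymm : ∀ a b, c a b = c b a) (hnn : ∀ a b, 0 ≤ c a b)
    (hconn : Connected c) {S : Set V} (hS : S.Nonempty) {w : V} {F α : V → ℝ}
    (hα : ∀ u ∉ S, α u = 0) (hF : laplacian c F = Pi.single w 1 - α) :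
    effRes c {w} S ≤ energy c F := by
  obtain ⟨φ, α₀, hα₀, -, hφ, hφS, hφw⟩ := exists_unitCurrent_potential hsymm hnn hconn hS w
  have hFφ := dirichletForm_eq_apply_of_laplacian_eq hsymm hF hα hφS
  have hφφ := dirichletForm_eq_apply_of_laplacian_eq hsymm hφ hα₀ hφS
  have hcs := (dirichletForm c).apply_sq_le_of_symm
    (fun f => (dirichletForm_self f).trans_ge (energy_nonneg hnn f))
    (LinearMap.BilinForm.isSymm_iff.1 dirichletForm_isSymm) F φ
  rw [hFφ, hφφ, hφw, dirichletForm_self] at hcs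
  have hR : 0 ≤ effRes c {w} S := by
    rw [← hφw, ← hφφ, dirichletForm_self]; exact energy_nonneg hnn φ
  nlinarith [energy_nonneg hnn F]

theorem exists_laplacian_eq_single_sub_single (hsymm : ∀ a b, c a b = c b a)
    (hnn : ∀ a b, 0 ≤ c a b) (hconn : Connected c) (u v : V) :
    ∃ φ : V → ℝ, laplacian c φ = Pi.single u 1 - Pi.single v 1 ∧
      energy c φ = effRes c {u} {v} := by
  obtain ⟨φ, α, hα, hsum, hφ, hE⟩ :=
    exists_energy_eq_effRes hsymm hnn hconn (Set.singleton_nonempty v) u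
  have hαv : α = Pi.single v 1 := by
    have hα' : ∀ x, x ≠ v → α x = 0 := fun x hx => hα x hx
    ext x
    by_cases hx : x = v
    · subst hx
      rw [← hsum, sum_eq_single x (fun y _ hy => hα' y hy) (by simp), Pi.single_eq_same]
    · rw [hα' x hx, Pi.single_eq_of_ne hx]
  exact ⟨φ, hαv ▸ hφ, hE⟩

theorem effRes_pos (hsymm : ∀ a b, c a b = c b a) (hnn : ∀ a b, 0 ≤ c a b)
    (hconn : Connected c) {u v : V} (huv : u ≠ v) : 0 < effRes c {u} {v} := by
  obtain ⟨φ, hφ, hE⟩ := exists_laplacian_eq_single_sub_single hsymm hnn hconn u v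
  rw [← hE]
  refine (energy_nonneg hnn φ).lt_of_ne fun h0 => ?_
  have hlap : laplacian c φ = 0 := by
    ext x
    exact sum_eq_zero fun y _ => by rw [hconn φ h0.symm x y, sub_self, mul_zero]
  simpa [huv] using congrFun (hφ.symm.trans hlap) u

theorem laplacian_sum_smul {r : V} {Φ : V → V → ℝ}
    (hΦ : ∀ u, laplacian c (Φ u) = Pi.single u 1 - Pi.single r 1) {β : V → ℝ}
    (hβ : ∑ u, β u = 0) : laplacian c (∑ u, β u • Φ u) = β := by
  ext x
  simp [hΦ, Pi.single_apply, mul_sub, sum_sub_distrib, hβ]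

theorem exists_laplacian_eq (hsymm : ∀ a b, c a b = c b a) (hnn : ∀ a b, 0 ≤ c a b)
    (hconn : Connected c) {β : V → ℝ} (hβ : ∑ u, β u = 0) : ∃ F, laplacian c F = β := by
  rcases isEmpty_or_nonempty V with hV | ⟨⟨r⟩⟩
  · exact ⟨0, Subsingleton.elim _ _⟩
  choose Φ hΦ using fun u =>
    (exists_laplacian_eq_single_sub_single hsymm hnn hconn u r).imp fun _ => And.left
  exact ⟨_, laplacian_sum_smul hΦ hβ⟩

variable {Ω : Type*} [MeasurableSpace Ω] {μ : Measure Ω} {η : V → Ω → ℝ}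

theorem integrable_sq_sub (hsymm : ∀ a b, c a b = c b a) (hnn : ∀ a b, 0 ≤ c a b)
    (hconn : Connected c) (hres : ∀ u v, ∫ ω, (η u ω - η v ω) ^ 2 ∂μ = effRes c {u} {v})
    (u v : V) : Integrable (fun ω => (η u ω - η v ω) ^ 2) μ := by
  rcases eq_or_ne u v with rfl | huv
  · simp
  -- a nonzero integral forces integrability, the integral of a non-integrable function being `0`
  exact .of_integral_ne_zero (by rw [hres]; exact (effRes_pos hsymm hnn hconn huv).ne')

theorem integral_sq_sum_eq_energy (hsymm : ∀ a b, c a b = c b a) (hnn : ∀ a b, 0 ≤ c a b)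
    (hconn : Connected c) (hres : ∀ u v, ∫ ω, (η u ω - η v ω) ^ 2 ∂μ = effRes c {u} {v})
    {β F : V → ℝ} (hβ : ∑ u, β u = 0) (hF : laplacian c F = β) :
    ∫ ω, (∑ u, β u * η u ω) ^ 2 ∂μ = energy c F := by
  rcases isEmpty_or_nonempty V with hV | ⟨⟨r⟩⟩
  · simp [energy]
  choose Φ hΦ using fun u =>
    (exists_laplacian_eq_single_sub_single hsymm hnn hconn u r).imp fun _ => And.left
  have hvar : ∀ u v, ∫ ω, (η u ω - η v ω) ^ 2 ∂μ = dirichletForm c (Φ u - Φ v) (Φ u - Φ v) := by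
    intro u v
    obtain ⟨φ, hφ, hE⟩ := exists_laplacian_eq_single_sub_single hsymm hnn hconn u v
    rw [hres, ← hE, dirichletForm_self]
    refine energy_eq_of_laplacian_eq hsymm hconn ?_
    rw [hφ, map_sub, hΦ u, hΦ v]
    abel
  have hpoint : ∀ ω, (∑ u, β u * η u ω) ^ 2 =
      -(1 / 2) * ∑ u, ∑ v, β u * β v * (η u ω - η v ω) ^ 2 := fun ω => by
    have := (⟨mul_comm⟩ : LinearMap.BilinForm.IsSymm (LinearMap.mul ℝ ℝ)).sum_sum_mul_apply_sub_sub
      univ β (η · ω) hβ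
    simp only [LinearMap.mul_apply', smul_eq_mul, ← sq] at this
    linarith
  calc ∫ ω, (∑ u, β u * η u ω) ^ 2 ∂μ
      = -(1 / 2) * ∑ u, ∑ v, β u * β v * ∫ ω, (η u ω - η v ω) ^ 2 ∂μ := by
        have hint := integrable_sq_sub (μ := μ) hsymm hnn hconn hres
        simp only [hpoint, integral_const_mul]
        rw [integral_finsetSum _ fun u _ =>
          integrable_finsetSum _ fun v _ => (hint u v).const_mul _]
        simp only [integral_finsetSum _ fun v _ => (hint _ v).const_mul _, integral_const_mul]
    _ = dirichletForm c (∑ u, β u • Φ u) (∑ u, β u • Φ u) := by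
        simp only [hvar, dirichletForm_isSymm.sum_sum_mul_apply_sub_sub univ β Φ hβ]
        ring
    _ = energy c F := by
        rw [dirichletForm_self]
        exact energy_eq_of_laplacian_eq hsymm hconn ((laplacian_sum_smul hΦ hβ).trans hF.symm)

end Network

open Network

theorem sqrt_effRes_eq_dist_affineHull_general {V Ω : Type*} [Fintype V]
    [MeasurableSpace Ω] (μ : Measure Ω)
    (c : V → V → ℝ) (hsymm : ∀ a b, c a b = c b a) (hnn : ∀ a b, 0 ≤ c a b)
    (hconn : Connected c)
    (η : V → Ω → ℝ)
    (hres : ∀ u v, ∫ ω, (η u ω - η v ω) ^ 2 ∂μ = effRes c {u} {v})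
    (w : V) (S : Set V) :
    Real.sqrt (effRes c {w} S) =
      sInf {t : ℝ | ∃ α : V → ℝ, (∀ u, u ∉ S → α u = 0) ∧ (∑ u, α u) = 1 ∧
        t = Real.sqrt (∫ ω, (η w ω - ∑ u, α u * η u ω) ^ 2 ∂μ)} := by
  classical
  rcases S.eq_empty_or_nonempty with rfl | hS
  · have hempty : {t : ℝ | ∃ α : V → ℝ, (∀ u, u ∉ (∅ : Set V) → α u = 0) ∧ (∑ u, α u) = 1 ∧
        t = Real.sqrt (∫ ω, (η w ω - ∑ u, α u * η u ω) ^ 2 ∂μ)} = ∅ :=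
      Set.eq_empty_of_forall_notMem fun _ ⟨α, hα, hsum, _⟩ => by
        simp [fun u => hα u (Set.notMem_empty u)] at hsum
    rw [effRes_singleton_empty hnn, Real.sqrt_zero, hempty, Real.sInf_empty]
  have hβ : ∀ α : V → ℝ, ∑ u, α u = 1 → ∑ u, (Pi.single w 1 - α : V → ℝ) u = 0 := fun α hsum => by
    simp [Finset.sum_sub_distrib, hsum]
  have hdist : ∀ α : V → ℝ, ∑ u, α u = 1 → ∀ F, laplacian c F = Pi.single w 1 - α →
      ∫ ω, (η w ω - ∑ u, α u * η u ω) ^ 2 ∂μ = energy c F := fun α hsum F hF => by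
    rw [← integral_sq_sum_eq_energy hsymm hnn hconn hres (hβ α hsum) hF]
    simp [sub_mul, Finset.sum_sub_distrib, Pi.single_apply]
  obtain ⟨F₀, α₀, hα₀, hsum₀, hF₀, hE₀⟩ := exists_energy_eq_effRes hsymm hnn hconn hS w
  refine (IsLeast.csInf_eq ⟨?_, ?_⟩).symm
  · exact ⟨α₀, hα₀, hsum₀, by rw [hdist α₀ hsum₀ F₀ hF₀, hE₀]⟩
  rintro t ⟨α, hα, hsum, rfl⟩
  obtain ⟨F, hF⟩ := exists_laplacian_eq hsymm hnn hconn (hβ α hsum)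
  rw [hdist α hsum F hF]
  exact Real.sqrt_le_sqrt (effRes_le_energy hsymm hnn hconn hS hα hF)

/-- For the Gaussian free field `{η_v}` on a finite connected network (the centered
Gaussian process with `η_{v₀} = 0` and `E[(η_u − η_v)²] = R_eff(u,v)`), for any vertex `w`
and any subset `S ⊆ V`, `√(R_eff(w,S))` equals the `L²` distance from `η_w` to the affine
hull of `{η_u : u ∈ S}`. -/
theorem sqrt_effRes_eq_dist_affineHull {V Ω : Type*} [Fintype V]
    [MeasurableSpace Ω] (μ : Measure Ω) [IsProbabilityMeasure μ]
    (c : V → V → ℝ) (hsymm : ∀ a b, c a b = c b a) (hnn : ∀ a b, 0 ≤ c a b)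
    (hconn : Connected c)
    (v₀ : V) (η : V → Ω → ℝ) (hmeas : ∀ v, Measurable (η v))
    (hG : IsCenteredGaussianProcess μ η)
    (h0 : ∀ᵐ ω ∂μ, η v₀ ω = 0)
    (hres : ∀ u v, ∫ ω, (η u ω - η v ω) ^ 2 ∂μ = effRes c {u} {v})
    (w : V) (S : Set V) :
    Real.sqrt (effRes c {w} S) =
      sInf {t : ℝ | ∃ α : V → ℝ, (∀ u, u ∉ S → α u = 0) ∧ (∑ u, α u) = 1 ∧
        t = Real.sqrt (∫ ω, (η w ω - ∑ u, α u * η u ω) ^ 2 ∂μ)} :=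
  sqrt_effRes_eq_dist_affineHull_general μ c hsymm hnn hconn η hres w S
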